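/- Let (K_i)_{i∈I} be a filtration of finite simplicial complexes over a totally ordered index set I with K_∞ = ∪_{i∈I} K_i finite, and let μ be an acyclic partial matching on K_∞ that respects the filtration (i.e., h(μ(σ)) = h(σ) whenever μ(σ) is defined, where h(σ) is the smallest i with σ ∈ K_i). Then for every q ≥ 0 there is a family of isomorphisms θ_i^q : H_q(Crit_*(K_i, μ)) → H_q(K_i), induced by the inclusion of chains Crit_q(K_i, μ) ⊆ C_q(K_i), such that for all i < j in I the square with top map f_i^j : H_q(Crit_*(K_i, μ)) → H_q(Crit_*(K_j, μ)) induced by inclusion of subcomplexes, bottom map g_i^j : H_q(K_i) → H_q(K_j) induced by inclusion K_i ⊆ K_j, and vertical maps θ_i^q, θ_j^q, commutes: g_i^j ∘ θ_i^q = θ_j^q ∘ f_i^j. -/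

import Mathlib

set_option maxSynthPendingDepth 2

/-! Simplicial ℤ/2 chains and homology machinery. -/

/-- Chains with `ℤ/2` coefficients, formal sums of finite subsets of `V`. -/
abbrev Ch (V : Type*) := Finset V →₀ ZMod 2

/-- The simplicial boundary operator: a simplex with at least two vertices is sent
to the sum of its codimension-1 faces; vertices are sent to `0`. -/
noncomputable def bdry (V : Type*) [DecidableEq V] : Ch V →ₗ[ZMod 2] Ch V :=
  Finsupp.linearCombination (ZMod 2) fun σ : Finset V =>
    if σ.card ≤ 1 then 0 else ∑ v ∈ σ, Finsupp.single (σ.erase v) (1 : ZMod 2)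

/-- A simplicial complex: a collection of nonempty finite subsets of `V`
closed under taking nonempty subsets. -/
def IsComplex {V : Type*} (K : Set (Finset V)) : Prop :=
  ∀ σ ∈ K, σ.Nonempty ∧ ∀ τ ⊆ σ, τ.Nonempty → τ ∈ K

/-- The space of chains supported on simplices of `K` with `k` vertices
(i.e. the simplicial chain group of degree `k - 1`). -/
noncomputable def chainCard {V : Type*} [DecidableEq V] (K : Set (Finset V)) (k : ℕ) :
    Submodule (ZMod 2) (Ch V) :=
  Submodule.span (ZMod 2) {f | ∃ σ ∈ K, σ.card = k ∧ f = Finsupp.single σ 1}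

theorem chainCard_mono {V : Type*} [DecidableEq V] {K₁ K₂ : Set (Finset V)}
    (h : K₁ ⊆ K₂) (k : ℕ) : chainCard K₁ k ≤ chainCard K₂ k := by
  apply Submodule.span_mono
  rintro f ⟨σ, hσ, hc, rfl⟩
  exact ⟨σ, h hσ, hc, rfl⟩

/-- Cycles (in cardinality grading `k`, i.e. degree `k-1`) of a chain subcomplex `W`. -/
noncomputable def cyclesOf {V : Type*} [DecidableEq V] (W : ℕ → Submodule (ZMod 2) (Ch V)) (k : ℕ) :
    Submodule (ZMod 2) (Ch V) :=
  W k ⊓ LinearMap.ker (bdry V)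

/-- Boundaries (in cardinality grading `k`, i.e. degree `k-1`) of a chain subcomplex `W`. -/
noncomputable def bdriesOf {V : Type*} [DecidableEq V] (W : ℕ → Submodule (ZMod 2) (Ch V)) (k : ℕ) :
    Submodule (ZMod 2) (Ch V) :=
  Submodule.map (bdry V) (W (k + 1))

/-- Homology of the chain complex `W` in cardinality grading `k` (degree `k - 1`):
cycles modulo boundaries. -/
abbrev homolOf {V : Type*} [DecidableEq V] (W : ℕ → Submodule (ZMod 2) (Ch V)) (k : ℕ) :=
  ↥(cyclesOf W k) ⧸ (bdriesOf W k).comap (cyclesOf W k).subtype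

/-- The map on homology induced by a degreewise inclusion of chain complexes. -/
noncomputable def homolMap {V : Type*} [DecidableEq V]
    (W W' : ℕ → Submodule (ZMod 2) (Ch V)) (h : ∀ k, W k ≤ W' k) (k : ℕ) :
    homolOf W k →ₗ[ZMod 2] homolOf W' k :=
  Submodule.mapQ _ _ (Submodule.inclusion (inf_le_inf (h k) le_rfl))
    (by
      intro x hx
      simp only [Submodule.mem_comap, Submodule.subtype_apply, Submodule.coe_inclusion]
        at hx ⊢
      exact Submodule.map_mono (h (k + 1)) hx)

/-! Discrete Morse theory: partial matchings, acyclicity, the closure map. -/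

/-- `Covers σ τ`: `σ` covers `τ` in the face poset, i.e. `τ ⊆ σ` in codimension one. -/
def Covers {V : Type*} (σ τ : Finset V) : Prop :=
  τ ⊆ σ ∧ σ.card = τ.card + 1

/-- A partial matching: an involution `μ` on a set `M` of simplices matching each
simplex with a simplex that covers it or that it covers. -/
structure PartialMatching (V : Type*) where
  M : Set (Finset V)
  μ : Finset V → Finset V
  mem_M : ∀ σ ∈ M, μ σ ∈ M
  invol : ∀ σ ∈ M, μ (μ σ) = σ
  matched : ∀ σ ∈ M, Covers (μ σ) σ ∨ Covers σ (μ σ)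

/-- Acyclicity of a partial matching: there is no cyclic sequence
`σ₁ ≻ μ(σ₁) ≺ σ₂ ≻ μ(σ₂) ≺ ⋯ ≺ σ_l ≻ μ(σ_l) ≺ σ₁` with `l ≥ 2` and the `σᵢ` distinct. -/
def PartialMatching.Acyclic {V : Type*} (m : PartialMatching V) : Prop :=
  ¬ ∃ (l : ℕ) (f : ℕ → Finset V), 2 ≤ l ∧
      (∀ i < l, ∀ j < l, f i = f j → i = j) ∧
      (∀ i < l, f i ∈ m.M ∧ Covers (f i) (m.μ (f i))) ∧
      (∀ i < l, Covers (f ((i + 1) % l)) (m.μ (f i)))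

/-- `M^↑`: matched simplices lying above their partner. -/
def Mup {V : Type*} (m : PartialMatching V) : Set (Finset V) :=
  {σ | σ ∈ m.M ∧ Covers σ (m.μ σ)}

/-- `M_q^↑` in cardinality grading: elements of `M^↑` with `k` vertices (degree `k-1`). -/
def MupCard {V : Type*} (m : PartialMatching V) (k : ℕ) : Set (Finset V) :=
  {σ | σ ∈ Mup m ∧ σ.card = k}

/-- `R_q(μ)` in cardinality grading: the unmatched (critical) simplices of `K`
with `k` vertices (degree `k-1`). -/
def Rcard {V : Type*} (K : Set (Finset V)) (m : PartialMatching V) (k : ℕ) :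
    Set (Finset V) :=
  {σ | σ ∈ K ∧ σ.card = k ∧ σ ∉ m.M}

/-- `(α, β)` is an edge of the graph `G(μ)`: `μ β` is defined, `β` lies above its
partner, and `α` covers `μ β` (with `β ≠ α`). -/
def IsEdge {V : Type*} (m : PartialMatching V) (α β : Finset V) : Prop :=
  β ≠ α ∧ β ∈ m.M ∧ Covers β (m.μ β) ∧ Covers α (m.μ β)

open scoped Classical in
/-- `φ` is the closure map of the matching `m` on `K`: it satisfies the defining
recursion `φ α = α + ∑ φ β` over the edges `(α, β)` emanating from `α` in `G(μ)`. -/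
def IsClosure {V : Type*} [Fintype V] [DecidableEq V] (K : Set (Finset V))
    (m : PartialMatching V) (φ : Finset V → Ch V) : Prop :=
  ∀ α ∈ K, φ α = Finsupp.single α 1 + ∑ β : Finset V, if IsEdge m α β then φ β else 0

/-- The degree-`(k-1)` chain group of the Morse (critical) complex of `C`:
the span of the closures of the unmatched simplices of `C` with `k` vertices. -/
noncomputable def critWOn {V : Type*} [DecidableEq V] (C : Set (Finset V))
    (m : PartialMatching V) (φ : Finset V → Ch V) (k : ℕ) :
    Submodule (ZMod 2) (Ch V) :=
  Submodule.span (ZMod 2) {f | ∃ γ, γ ∈ C ∧ γ.card = k ∧ γ ∉ m.M ∧ f = φ γ}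

theorem critWOn_mono {V : Type*} [DecidableEq V] {C₁ C₂ : Set (Finset V)}
    (h : C₁ ⊆ C₂) (m : PartialMatching V) (φ : Finset V → Ch V) (k : ℕ) :
    critWOn C₁ m φ k ≤ critWOn C₂ m φ k := by
  apply Submodule.span_mono
  rintro f ⟨γ, hγ, hc, hm, rfl⟩
  exact ⟨γ, h hγ, hc, hm, rfl⟩

/-- The degree-`(k-1)` chain group of the complex `Match`, spanned by `M_{k-1}^↑`
together with the boundaries of the elements of `M_k^↑`. -/
noncomputable def matchW {V : Type*} [DecidableEq V] (m : PartialMatching V) (k : ℕ) :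
    Submodule (ZMod 2) (Ch V) :=
  Submodule.span (ZMod 2)
    ({f | ∃ σ ∈ MupCard m k, f = Finsupp.single σ 1} ∪
      {f | ∃ β ∈ MupCard m (k + 1), f = bdry V (Finsupp.single β 1)})

/-- The set `B_q^R ∪ B_q^↑ ∪ B_q^↓` (in cardinality grading `k = q + 1`). -/
noncomputable def morseBasis {V : Type*} [DecidableEq V] (K : Set (Finset V))
    (m : PartialMatching V) (φ : Finset V → Ch V) (k : ℕ) : Set (Ch V) :=
  {f | ∃ γ ∈ Rcard K m k, f = φ γ} ∪
    ({f | ∃ σ ∈ MupCard m k, f = Finsupp.single σ 1} ∪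
      {f | ∃ β ∈ MupCard m (k + 1), f = bdry V (Finsupp.single β 1)})

/-!
The chain group of each level `L = K i` splits as `C(L) = Crit(L) ⊕ Match(L)`, where `Match(L)`
is spanned by the simplices matched with one of their faces together with the boundaries of such
simplices. The closure `φ γ` of a critical simplex is `γ` plus a combination of up-simplices, and
`∂` pairs up-simplices `β` with their lower partners `μ β` unitriangularly (acyclicity of the
matching makes `IsEdge` well founded). From this, both summands are subcomplexes and `Match(L)`
is acyclic, so the inclusion `Crit(L) ⊆ C(L)` is a quasi-isomorphism. Since the matching respects
the filtration, it restricts to every level, and the squares commute because all maps are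
induced by inclusions of chains.
-/

open Finsupp

section Chains

variable {V : Type*}

theorem Covers.asymm {σ τ : Finset V} (h : Covers σ τ) : ¬Covers τ σ := fun h' => by
  have := h.2; have := h'.2; omega

variable [DecidableEq V]

instance : DecidableRel (Covers (V := V)) := fun _ _ => inferInstanceAs (Decidable (_ ∧ _))

theorem covers_iff_covBy {σ τ : Finset V} : Covers σ τ ↔ τ ⋖ σ := by
  rw [Finset.covBy_iff_card_sdiff_eq_one, Covers]
  refine and_congr_right fun hsub => ?_
  have := Finset.card_le_card hsub
  rw [Finset.card_sdiff_of_subset hsub]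
  omega

theorem covers_iff_exists_erase {σ τ : Finset V} : Covers σ τ ↔ ∃ v ∈ σ, σ.erase v = τ := by
  rw [covers_iff_covBy, Finset.covBy_iff_exists_erase]

theorem bdry_single (σ : Finset V) :
    bdry V (single σ 1) =
      if σ.card ≤ 1 then 0 else ∑ v ∈ σ, single (σ.erase v) (1 : ZMod 2) := by
  simp [bdry, linearCombination_single]

theorem bdry_single_apply (σ : Finset V) {τ : Finset V} (hτ : τ.Nonempty) :
    bdry V (single σ 1) τ = if Covers σ τ then 1 else 0 := by
  rw [bdry_single]
  split_ifs with hσ hc hc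
  · have := hc.2; have := hτ.card_pos; omega
  · rfl
  · obtain ⟨v, hv, rfl⟩ := covers_iff_exists_erase.mp hc
    rw [finsetSum_apply, Finset.sum_eq_single_of_mem v hv]
    · exact single_eq_same
    · exact fun w hw hwv => single_eq_of_ne (by rwa [Ne, Finset.erase_inj σ hv, eq_comm])
  · rw [finsetSum_apply]
    refine Finset.sum_eq_zero fun v hv => single_eq_of_ne ?_
    rintro rfl
    exact hc (covers_iff_exists_erase.mpr ⟨v, hv, rfl⟩)

theorem bdry_apply [Fintype V] (x : Ch V) {τ : Finset V} (hτ : τ.Nonempty) :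
    bdry V x τ = ∑ σ, if Covers σ τ then x σ else 0 := by
  induction x using Finsupp.induction_linear with
  | zero => simp
  | add a b ha hb =>
    simp only [map_add, Finsupp.add_apply, ha, hb, ← Finset.sum_add_distrib]
    exact Finset.sum_congr rfl fun σ _ => by split_ifs <;> simp
  | single σ c =>
    rw [← smul_single_one, map_smul, Finsupp.smul_apply, bdry_single_apply σ hτ,
      Finset.sum_eq_single σ (fun σ' _ h => by simp [single_eq_of_ne h]) (by simp)]
    split_ifs <;> simp

theorem bdry_bdry_single (σ : Finset V) : bdry V (bdry V (single σ 1)) = 0 := by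
  rw [bdry_single]
  split_ifs with h1
  · exact map_zero _
  rw [map_sum]
  have hfaces : ∀ v ∈ σ, bdry V (single (σ.erase v) 1) =
      if σ.card ≤ 2 then 0 else ∑ w ∈ σ.erase v, single ((σ.erase v).erase w) (1 : ZMod 2) := by
    intro v hv
    rw [bdry_single, Finset.card_erase_of_mem hv]
    congr 1
    simp only [eq_iff_iff]
    omega
  rw [Finset.sum_congr rfl hfaces]
  split_ifs with h2
  · simp
  rw [Finset.sum_sigma']
  -- each face of codimension two appears twice, once for each order of removing its two vertices
  refine Finset.sum_involution (fun p _ => ⟨p.2, p.1⟩) (fun p _ => ?_) (fun p hp _ he => ?_)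
    (fun p hp => ?_) (fun _ _ => rfl)
  · rw [Finset.erase_right_comm, ← two_smul (ZMod 2), show (2 : ZMod 2) = 0 from rfl, zero_smul]
  · exact (Finset.mem_erase.mp (Finset.mem_sigma.mp hp).2).1 (congrArg Sigma.fst he)
  · obtain ⟨hv, hw⟩ := Finset.mem_sigma.mp hp
    obtain ⟨hwv, hwσ⟩ := Finset.mem_erase.mp hw
    exact Finset.mem_sigma.mpr ⟨hwσ, Finset.mem_erase.mpr ⟨Ne.symm hwv, hv⟩⟩

theorem bdry_bdry (x : Ch V) : bdry V (bdry V x) = 0 := by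
  induction x using Finsupp.induction_linear with
  | zero => simp
  | add a b ha hb => rw [map_add, map_add, ha, hb, add_zero]
  | single σ c => rw [← smul_single_one, map_smul, map_smul, bdry_bdry_single, smul_zero]

theorem chainCard_eq_supported (K : Set (Finset V)) (k : ℕ) :
    chainCard K k = supported (ZMod 2) (ZMod 2) {σ | σ ∈ K ∧ σ.card = k} := by
  rw [supported_eq_span_single, chainCard]
  congr 1
  ext f
  simp [and_assoc, eq_comm]

theorem single_mem_chainCard {K : Set (Finset V)} {σ : Finset V} (hσ : σ ∈ K) :
    single σ 1 ∈ chainCard K σ.card :=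
  Submodule.subset_span ⟨σ, hσ, rfl, rfl⟩

theorem bdry_mem_chainCard {K : Set (Finset V)} (hK : IsComplex K) {k : ℕ} {x : Ch V}
    (hx : x ∈ chainCard K (k + 1)) : bdry V x ∈ chainCard K k := by
  refine (Submodule.span_le (p := (chainCard K k).comap (bdry V))).mpr ?_ hx
  rintro _ ⟨σ, hσ, hcard, rfl⟩
  simp only [SetLike.mem_coe, Submodule.mem_comap, bdry_single]
  split_ifs with h1
  · exact zero_mem _
  refine Submodule.sum_mem _ fun v hv => ?_
  have hcard' : (σ.erase v).card = k := by rw [Finset.card_erase_of_mem hv]; omega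
  have hne : (σ.erase v).Nonempty := by rw [← Finset.card_pos]; omega
  exact hcard' ▸ single_mem_chainCard ((hK σ hσ).2 _ (Finset.erase_subset v σ) hne)

end Chains

section Homology

variable {V : Type*} [DecidableEq V]

theorem homolMap_comp (W₁ W₂ W₃ : ℕ → Submodule (ZMod 2) (Ch V)) (h₁₂ : ∀ k, W₁ k ≤ W₂ k)
    (h₂₃ : ∀ k, W₂ k ≤ W₃ k) (k : ℕ) :
    (homolMap W₂ W₃ h₂₃ k).comp (homolMap W₁ W₂ h₁₂ k) =
      homolMap W₁ W₃ (fun k => (h₁₂ k).trans (h₂₃ k)) k :=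
  Submodule.linearMap_qext _ rfl

variable {W C U : ℕ → Submodule (ZMod 2) (Ch V)}

theorem exists_add_of_bdry_mem (hC : ∀ k, C k ≤ W k ⊔ U k) (hWU : ∀ k, Disjoint (W k) (U k))
    (hW : ∀ k, ∀ x ∈ W (k + 1), bdry V x ∈ W k) (hU : ∀ k, ∀ x ∈ U (k + 1), bdry V x ∈ U k)
    {k : ℕ} {c : Ch V} (hc : c ∈ C (k + 1)) (hbc : bdry V c ∈ W k) :
    ∃ a ∈ W (k + 1), ∃ u ∈ U (k + 1), c = a + u ∧ bdry V u = 0 := by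
  obtain ⟨a, ha, u, hu, rfl⟩ := Submodule.mem_sup.mp (hC _ hc)
  refine ⟨a, ha, u, hu, rfl, Submodule.disjoint_def.mp (hWU k) _ ?_ (hU k u hu)⟩
  rw [map_add] at hbc
  simpa using sub_mem hbc (hW k a ha)

theorem homolMap_bijective_of_acyclic_complement (hWC : ∀ k, W k ≤ C k)
    (hC : ∀ k, C k ≤ W k ⊔ U k) (hWU : ∀ k, Disjoint (W k) (U k))
    (hW : ∀ k, ∀ x ∈ W (k + 1), bdry V x ∈ W k) (hU : ∀ k, ∀ x ∈ U (k + 1), bdry V x ∈ U k)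
    (hUC : ∀ k, ∀ x ∈ U k, bdry V x = 0 → x ∈ bdriesOf C k) (k : ℕ) :
    Function.Bijective (homolMap W C hWC (k + 1)) := by
  constructor
  · refine (injective_iff_map_eq_zero _).mpr fun x hx => ?_
    obtain ⟨z, rfl⟩ := Submodule.Quotient.mk_surjective _ x
    rw [homolMap, Submodule.mapQ_apply, Submodule.Quotient.mk_eq_zero] at hx
    obtain ⟨c, hc, hcz⟩ := hx
    obtain ⟨a, ha, u, -, rfl, hu⟩ := exists_add_of_bdry_mem hC hWU hW hU hc (hcz ▸ z.2.1)
    rw [map_add, hu, add_zero] at hcz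
    rw [Submodule.Quotient.mk_eq_zero]
    exact ⟨a, ha, hcz⟩
  · intro x
    obtain ⟨z, rfl⟩ := Submodule.Quotient.mk_surjective _ x
    have hbz : bdry V z = 0 := z.2.2
    obtain ⟨a, ha, u, hu, hz, hbu⟩ :=
      exists_add_of_bdry_mem hC hWU hW hU z.2.1 (hbz ▸ zero_mem _)
    have hba : bdry V a = 0 := by rwa [hz, map_add, hbu, add_zero] at hbz
    refine ⟨Submodule.Quotient.mk ⟨a, ha, hba⟩, ?_⟩
    rw [homolMap, Submodule.mapQ_apply, Submodule.Quotient.eq]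
    have hdiff : a - (z : Ch V) = -u := by rw [hz]; abel
    show a - (z : Ch V) ∈ bdriesOf C (k + 1)
    rw [hdiff]
    exact neg_mem (hUC _ u hu hbu)

end Homology

theorem exists_injective_cycle_of_descending_chain {α : Type*} [Finite α] {r : α → α → Prop}
    (g : ℕ → α) (hg : ∀ n, r (g (n + 1)) (g n)) :
    ∃ (l : ℕ) (f : ℕ → α), 0 < l ∧ (∀ i < l, ∀ j < l, f i = f j → i = j) ∧
      ∀ i < l, r (f ((i + 1) % l)) (f i) := by
  classical
  have hrep : ∃ d, 0 < d ∧ ∃ a, g a = g (a + d) := by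
    obtain ⟨x, y, hxy, hgxy⟩ := Finite.exists_ne_map_eq_of_infinite g
    rcases lt_or_gt_of_ne hxy with h | h
    · exact ⟨y - x, by omega, x, by rwa [Nat.add_sub_cancel' h.le]⟩
    · exact ⟨x - y, by omega, y, by rw [Nat.add_sub_cancel' h.le, hgxy]⟩
  -- a repetition at minimal distance closes a cycle without repeated vertices
  obtain ⟨hd, a, ha⟩ := Nat.find_spec hrep
  have hmin : ∀ i j, i < j → j < Nat.find hrep → g (a + i) ≠ g (a + j) := fun i j hij hj he =>
    Nat.find_min hrep (m := j - i) (by omega)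
      ⟨by omega, a + i, by rwa [show a + i + (j - i) = a + j by omega]⟩
  refine ⟨Nat.find hrep, fun i => g (a + i), hd, fun i hi j hj hij => ?_, fun i hi => ?_⟩
  · by_contra hne
    rcases lt_or_gt_of_ne hne with h | h
    · exact hmin i j h hj hij
    · exact hmin j i h hi hij.symm
  · rcases (show i + 1 ≤ _ from hi).lt_or_eq with h | h
    · rw [Nat.mod_eq_of_lt h]
      exact hg (a + i)
    · rw [← h, Nat.mod_self]
      show r (g (a + 0)) (g (a + i))
      rw [add_zero, ha, ← h]
      exact hg (a + i)

theorem WellFounded.flip_of_finite {α : Type*} [Finite α] {r : α → α → Prop}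
    (h : WellFounded r) : WellFounded (flip r) := by
  have : IsTrans α (flip (Relation.TransGen r)) := ⟨fun _ _ _ hab hbc => hbc.trans hab⟩
  have : Std.Irrefl (flip (Relation.TransGen r)) := ⟨h.transGen.irrefl.irrefl⟩
  have hsub : Subrelation (flip r) (flip (Relation.TransGen r)) := fun h => .single h
  exact hsub.wf (Finite.wellFounded_of_trans_of_irrefl _)

section Matching

variable {V : Type*} {m : PartialMatching V}

theorem PartialMatching.Acyclic.wellFounded_isEdge [Finite V] (hac : m.Acyclic) :
    WellFounded (IsEdge m) := by
  rw [wellFounded_iff_isEmpty_descending_chain]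
  refine ⟨fun ⟨g, hg⟩ => hac ?_⟩
  obtain ⟨l, f, hl, hinj, hcyc⟩ := exists_injective_cycle_of_descending_chain g hg
  have hl2 : 2 ≤ l := by
    by_contra h
    obtain rfl : l = 1 := by omega
    exact (hcyc 0 hl).1 rfl
  exact ⟨l, f, hl2, hinj, fun i hi => ⟨(hcyc i hi).2.1, (hcyc i hi).2.2.1⟩,
    fun i hi => (hcyc i hi).2.2.2⟩

theorem PartialMatching.Acyclic.wellFounded_flip_isEdge [Finite V] (hac : m.Acyclic) :
    WellFounded (flip (IsEdge m)) :=
  hac.wellFounded_isEdge.flip_of_finite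

theorem isEdge_card_eq {α β : Finset V} (h : IsEdge m α β) : β.card = α.card := by
  rw [h.2.2.1.2, h.2.2.2.2]

theorem covers_mu_of_notMem_Mup {τ : Finset V} (hτ : τ ∈ m.M) (hτ' : τ ∉ Mup m) :
    Covers (m.μ τ) τ :=
  (m.matched τ hτ).resolve_right fun h => hτ' ⟨hτ, h⟩

theorem mu_mem_Mup_of_notMem_Mup {τ : Finset V} (hτ : τ ∈ m.M) (hτ' : τ ∉ Mup m) :
    m.μ τ ∈ Mup m :=
  ⟨m.mem_M τ hτ, by rw [m.invol τ hτ]; exact covers_mu_of_notMem_Mup hτ hτ'⟩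

theorem isEdge_mu_of_covers {β τ : Finset V} (hτ : τ ∈ m.M) (hτ' : τ ∉ Mup m)
    (hcov : Covers β τ) (hne : τ ≠ m.μ β) : IsEdge m β (m.μ τ) :=
  ⟨fun h => hne (by rw [← h, m.invol τ hτ]), m.mem_M τ hτ,
    (mu_mem_Mup_of_notMem_Mup hτ hτ').2, by rwa [m.invol τ hτ]⟩

theorem mu_notMem_Mup {β : Finset V} (hβ : β ∈ Mup m) : m.μ β ∉ Mup m := fun h => by
  have h' := h.2
  rw [m.invol β hβ.1] at h'
  exact hβ.2.asymm h'

noncomputable def upChains (m : PartialMatching V) (L : Set (Finset V)) (k : ℕ) :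
    Submodule (ZMod 2) (Ch V) :=
  supported (ZMod 2) (ZMod 2) {σ | σ ∈ L ∧ σ ∈ Mup m ∧ σ.card = k}

theorem single_mem_upChains {L : Set (Finset V)} {σ : Finset V} (hσ : σ ∈ L) (hup : σ ∈ Mup m) :
    single σ 1 ∈ upChains m L σ.card :=
  single_mem_supported _ _ ⟨hσ, hup, rfl⟩

variable [DecidableEq V]

/-- The pairing `(β, β') ↦ (∂β)(μ β')` on up-simplices is unitriangular with respect to the
well-founded relation `IsEdge m`. -/
theorem eq_zero_of_bdry_apply_mu [Fintype V] (hac : m.Acyclic) (hne : ∀ σ ∈ m.M, σ.Nonempty)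
    {S : Set (Finset V)} (hS : S ⊆ Mup m) {x : Ch V} (hx : x ∈ supported (ZMod 2) (ZMod 2) S)
    (hbx : ∀ β ∈ S, bdry V x (m.μ β) = 0) : x = 0 := by
  rw [mem_supported'] at hx
  ext τ
  induction τ using hac.wellFounded_isEdge.induction with
  | _ τ ih =>
  by_cases hτ : τ ∈ S
  · have hup := hS hτ
    have h := hbx τ hτ
    rw [bdry_apply x (hne _ (m.mem_M τ hup.1)), Finset.sum_eq_single τ] at h
    · rwa [if_pos hup.2] at h
    · intro σ _ hστ
      split_ifs with hc
      · exact ih σ ⟨Ne.symm hστ, hup.1, hup.2, hc⟩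
      · rfl
    · simp
  · exact hx τ hτ

/-- The complex `Match` of the paper (see `matchW`), restricted to the simplices of `L`. -/
noncomputable def matchWOn (m : PartialMatching V) (L : Set (Finset V)) (k : ℕ) :
    Submodule (ZMod 2) (Ch V) :=
  upChains m L k ⊔ (upChains m L (k + 1)).map (bdry V)

variable {L : Set (Finset V)}

theorem upChains_le_chainCard (k : ℕ) : upChains m L k ≤ chainCard L k := by
  rw [chainCard_eq_supported]
  exact supported_mono fun σ hσ => ⟨hσ.1, hσ.2.2⟩

theorem upChains_le_matchWOn (k : ℕ) : upChains m L k ≤ matchWOn m L k := le_sup_left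

theorem bdry_mem_matchWOn {k : ℕ} {x : Ch V} (hx : x ∈ matchWOn m L (k + 1)) :
    bdry V x ∈ matchWOn m L k := by
  obtain ⟨s, hs, _, ⟨y, -, rfl⟩, rfl⟩ := Submodule.mem_sup.mp hx
  rw [map_add, bdry_bdry, add_zero]
  exact Submodule.mem_sup_right (Submodule.mem_map_of_mem hs)

theorem mem_bdriesOf_of_mem_matchWOn [Fintype V] (hac : m.Acyclic)
    (hne : ∀ σ ∈ m.M, σ.Nonempty) {k : ℕ} {x : Ch V} (hx : x ∈ matchWOn m L k)
    (hbx : bdry V x = 0) : x ∈ bdriesOf (chainCard L) k := by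
  obtain ⟨s, hs, _, ⟨y, hy, rfl⟩, rfl⟩ := Submodule.mem_sup.mp hx
  rw [map_add, bdry_bdry, add_zero] at hbx
  obtain rfl : s = 0 :=
    eq_zero_of_bdry_apply_mu hac hne (fun _ h => h.2.1) hs fun β _ => by rw [hbx]; rfl
  rw [zero_add]
  exact Submodule.mem_map_of_mem (upChains_le_chainCard _ hy)

end Matching

section Morse

variable {V : Type*} [Fintype V] [DecidableEq V]

structure IsMorseMatchingOn (L : Set (Finset V)) (m : PartialMatching V) (φ : Finset V → Ch V) :
    Prop where
  isComplex : IsComplex L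
  mu_mem : ∀ σ ∈ m.M, σ ∈ L → m.μ σ ∈ L
  nonempty : ∀ σ ∈ m.M, σ.Nonempty
  acyclic : m.Acyclic
  isClosure : IsClosure L m φ

namespace IsMorseMatchingOn

variable {L : Set (Finset V)} {m : PartialMatching V} {φ : Finset V → Ch V}

theorem mem_of_isEdge (hm : IsMorseMatchingOn L m φ) {α β : Finset V} (hα : α ∈ L)
    (hE : IsEdge m α β) : β ∈ L := by
  obtain ⟨-, hβ, -, hcov⟩ := hE
  have hμβ := m.mem_M β hβ
  have := hm.mu_mem _ hμβ ((hm.isComplex α hα).2 _ hcov.1 (hm.nonempty _ hμβ))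
  rwa [m.invol β hβ] at this

theorem sub_single_mem_upChains (hm : IsMorseMatchingOn L m φ) {α : Finset V} (hα : α ∈ L) :
    φ α - single α 1 ∈ upChains m L α.card := by
  induction α using hm.acyclic.wellFounded_flip_isEdge.induction with
  | _ α ih =>
  rw [hm.isClosure α hα, add_sub_cancel_left]
  refine Submodule.sum_mem _ fun β _ => ?_
  split_ifs with hE
  · have hβ := hm.mem_of_isEdge hα hE
    rw [← isEdge_card_eq hE, ← sub_add_cancel (φ β) (single β 1)]
    exact add_mem (ih β hE hβ) (single_mem_upChains hβ ⟨hE.2.1, hE.2.2.1⟩)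
  · exact zero_mem _

theorem apply_of_notMem_Mup (hm : IsMorseMatchingOn L m φ) {α τ : Finset V} (hα : α ∈ L)
    (hτ : τ ∉ Mup m) : φ α τ = single α 1 τ := by
  have := (mem_supported' _ _).mp (hm.sub_single_mem_upChains hα) τ fun h => hτ h.2.1
  rwa [Finsupp.sub_apply, sub_eq_zero] at this

theorem mem_chainCard (hm : IsMorseMatchingOn L m φ) {α : Finset V} (hα : α ∈ L) :
    φ α ∈ chainCard L α.card := by
  rw [← sub_add_cancel (φ α) (single α 1)]
  exact add_mem (upChains_le_chainCard _ (hm.sub_single_mem_upChains hα))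
    (single_mem_chainCard hα)

theorem critWOn_le_chainCard (hm : IsMorseMatchingOn L m φ) (k : ℕ) :
    critWOn L m φ k ≤ chainCard L k :=
  Submodule.span_le.mpr fun _ ⟨_, hγ, hcard, _, he⟩ => he ▸ hcard ▸ hm.mem_chainCard hγ

theorem bdry_apply_mu (hm : IsMorseMatchingOn L m φ) {α β : Finset V} (hα : α ∈ L) (hβ : β ∈ Mup m)
    (hcard : β.card = α.card) : bdry V (φ α) (m.μ β) = if α = β then 1 else 0 := by
  induction α using hm.acyclic.wellFounded_flip_isEdge.induction with
  | _ α ih =>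
  have hμβ : (m.μ β).Nonempty := hm.nonempty _ (m.mem_M β hβ.1)
  rw [hm.isClosure α hα, map_add, map_sum, Finsupp.add_apply, finsetSum_apply,
    bdry_single_apply α hμβ, Finset.sum_eq_single β (fun β' _ hne => ?_) (by simp)]
  · by_cases hαβ : α = β
    · subst hαβ
      simp [hβ.2, IsEdge]
    have hiff : IsEdge m α β ↔ Covers α (m.μ β) :=
      ⟨fun h => h.2.2.2, fun h => ⟨Ne.symm hαβ, hβ.1, hβ.2, h⟩⟩
    by_cases hc : Covers α (m.μ β)
    · have hE := hiff.mpr hc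
      rw [if_pos hc, if_pos hE, ih β hE (hm.mem_of_isEdge hα hE) rfl, if_pos rfl, if_neg hαβ]
      rfl
    · rw [if_neg hc, if_neg (mt hiff.mp hc), if_neg hαβ, map_zero, zero_add]
      rfl
  · split_ifs with hE
    · rw [ih β' hE (hm.mem_of_isEdge hα hE) (hcard.trans (isEdge_card_eq hE).symm), if_neg hne]
    · rw [map_zero]
      rfl

theorem critWOn_apply_of_notMem_Mup (hm : IsMorseMatchingOn L m φ) {k : ℕ} {x : Ch V}
    (hx : x ∈ critWOn L m φ k) {τ : Finset V} (hτ : τ ∈ m.M) (hτ' : τ ∉ Mup m) : x τ = 0 := by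
  refine (Submodule.span_le (p := LinearMap.ker (lapply τ))).mpr ?_ hx
  rintro _ ⟨γ, hγ, -, hγM, rfl⟩
  show φ γ τ = 0
  rw [hm.apply_of_notMem_Mup hγ hτ', single_eq_of_ne]
  rintro rfl
  exact hγM hτ

theorem bdry_critWOn_apply_mu (hm : IsMorseMatchingOn L m φ) {k : ℕ} {x : Ch V}
    (hx : x ∈ critWOn L m φ k) {β : Finset V} (hβ : β ∈ Mup m) (hcard : β.card = k) :
    bdry V x (m.μ β) = 0 := by
  refine (Submodule.span_le (p := LinearMap.ker ((lapply (m.μ β)).comp (bdry V)))).mpr ?_ hx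
  rintro _ ⟨γ, hγ, hγc, hγM, rfl⟩
  show bdry V (φ γ) (m.μ β) = 0
  rw [hm.bdry_apply_mu hγ hβ (hcard.trans hγc.symm), if_neg]
  rintro rfl
  exact hγM hβ.1

theorem mem_critWOn_of_forall (hm : IsMorseMatchingOn L m φ) {k : ℕ} {x : Ch V}
    (hx : x ∈ chainCard L k) (hdown : ∀ τ ∈ m.M, τ ∉ Mup m → τ.card = k → x τ = 0)
    (hup : ∀ β ∈ L, β ∈ Mup m → β.card = k → bdry V x (m.μ β) = 0) :
    x ∈ critWOn L m φ k := by
  classical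
  set R := Finset.univ.filter fun γ => γ ∈ L ∧ γ.card = k ∧ γ ∉ m.M
  set y := ∑ γ ∈ R, x γ • φ γ
  have hy : y ∈ critWOn L m φ k := Submodule.sum_mem _ fun γ hγ => Submodule.smul_mem _ _
    (Submodule.subset_span ⟨γ, (Finset.mem_filter.mp hγ).2.1, (Finset.mem_filter.mp hγ).2.2.1,
      (Finset.mem_filter.mp hγ).2.2.2, rfl⟩)
  have hyx : ∀ τ ∈ L, τ.card = k → τ ∉ m.M → y τ = x τ := fun τ hτL hτc hτM => by
    rw [finsetSum_apply, Finset.sum_eq_single_of_mem τ (by simp [R, hτL, hτc, hτM])]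
    · simp [hm.apply_of_notMem_Mup hτL fun h => hτM h.1]
    · intro γ hγ hne
      rw [Finsupp.smul_apply, hm.apply_of_notMem_Mup (Finset.mem_filter.mp hγ).2.1
        fun h => hτM h.1, single_eq_of_ne (Ne.symm hne), smul_zero]
  suffices x - y = 0 from sub_eq_zero.mp this ▸ hy
  refine eq_zero_of_bdry_apply_mu hm.acyclic hm.nonempty
    (S := {σ | σ ∈ L ∧ σ ∈ Mup m ∧ σ.card = k}) (fun _ h => h.2.1) ?_ ?_
  · have hxy := sub_mem hx (hm.critWOn_le_chainCard k hy)
    rw [chainCard_eq_supported, mem_supported'] at hxy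
    refine (mem_supported' _ _).mpr fun τ hτ => ?_
    by_cases hτL : τ ∈ L ∧ τ.card = k
    · have hτ' : τ ∉ Mup m := fun h => hτ ⟨hτL.1, h, hτL.2⟩
      by_cases hτM : τ ∈ m.M
      · rw [Finsupp.sub_apply, hdown τ hτM hτ' hτL.2,
          hm.critWOn_apply_of_notMem_Mup hy hτM hτ', sub_zero]
      · rw [Finsupp.sub_apply, hyx τ hτL.1 hτL.2 hτM, sub_self]
    · exact hxy τ hτL
  · rintro β ⟨hβL, hβ, hβc⟩
    rw [map_sub, Finsupp.sub_apply, hup β hβL hβ hβc, hm.bdry_critWOn_apply_mu hy hβ hβc,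
      sub_zero]

theorem bdry_mem_critWOn (hm : IsMorseMatchingOn L m φ) {k : ℕ} {x : Ch V}
    (hx : x ∈ critWOn L m φ (k + 1)) : bdry V x ∈ critWOn L m φ k := by
  refine (Submodule.span_le (p := (critWOn L m φ k).comap (bdry V))).mpr ?_ hx
  rintro _ ⟨γ, hγ, hγc, hγM, rfl⟩
  refine hm.mem_critWOn_of_forall (bdry_mem_chainCard hm.isComplex (hγc ▸ hm.mem_chainCard hγ))
    (fun τ hτ hτ' hτc => ?_) fun β _ _ _ => by rw [bdry_bdry]; rfl
  have := hm.bdry_apply_mu hγ (mu_mem_Mup_of_notMem_Mup hτ hτ')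
    (by rw [(covers_mu_of_notMem_Mup hτ hτ').2, hτc, hγc])
  rwa [m.invol τ hτ, if_neg fun h : γ = m.μ τ => hγM (h ▸ m.mem_M τ hτ)] at this

theorem disjoint_critWOn_matchWOn (hm : IsMorseMatchingOn L m φ) (k : ℕ) :
    Disjoint (critWOn L m φ k) (matchWOn m L k) := by
  refine Submodule.disjoint_def.mpr fun x hx hx' => ?_
  obtain ⟨s, hs, _, ⟨y, hy, rfl⟩, rfl⟩ := Submodule.mem_sup.mp hx'
  obtain rfl : s = 0 := eq_zero_of_bdry_apply_mu hm.acyclic hm.nonempty (fun _ h => h.2.1) hs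
    fun β ⟨_, hβ, hβc⟩ => by
      have := hm.bdry_critWOn_apply_mu hx hβ hβc
      rwa [map_add, bdry_bdry, add_zero] at this
  rw [zero_add] at hx ⊢
  rw [eq_zero_of_bdry_apply_mu hm.acyclic hm.nonempty (fun _ h => h.2.1) hy
    fun β ⟨_, hβ, _⟩ => hm.critWOn_apply_of_notMem_Mup hx (m.mem_M β hβ.1) (mu_notMem_Mup hβ),
    map_zero]

theorem single_mem_critWOn_sup_matchWOn_of_mem_M_imp (hm : IsMorseMatchingOn L m φ) {σ : Finset V}
    (hσ : σ ∈ L) (hσM : σ ∈ m.M → σ ∈ Mup m) :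
    single σ 1 ∈ critWOn L m φ σ.card ⊔ matchWOn m L σ.card := by
  by_cases hσM' : σ ∈ m.M
  · exact Submodule.mem_sup_right (upChains_le_matchWOn _ (single_mem_upChains hσ (hσM hσM')))
  rw [← sub_sub_cancel (φ σ) (single σ 1)]
  exact sub_mem (Submodule.mem_sup_left (Submodule.subset_span ⟨σ, hσ, rfl, hσM', rfl⟩))
    (Submodule.mem_sup_right (upChains_le_matchWOn _ (hm.sub_single_mem_upChains hσ)))

theorem single_mem_critWOn_sup_matchWOn (hm : IsMorseMatchingOn L m φ) {σ : Finset V} (hσ : σ ∈ L) :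
    single σ 1 ∈ critWOn L m φ σ.card ⊔ matchWOn m L σ.card := by
  induction σ using (InvImage.wf m.μ hm.acyclic.wellFounded_flip_isEdge).induction with
  | _ σ ih =>
  by_cases hlow : σ ∈ m.M ∧ σ ∉ Mup m
  swap
  · exact hm.single_mem_critWOn_sup_matchWOn_of_mem_M_imp hσ (by tauto)
  obtain ⟨hσM, hup⟩ := hlow
  -- `σ` is the lower partner of `β`, so `σ = ∂β - (the other faces of β)`
  set β := m.μ σ
  have hβ : β ∈ Mup m := mu_mem_Mup_of_notMem_Mup hσM hup
  have hcov : Covers β σ := covers_mu_of_notMem_Mup hσM hup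
  have hβL : β ∈ L := hm.mu_mem σ hσM hσ
  obtain ⟨v₀, hv₀, hv₀σ⟩ := covers_iff_exists_erase.mp hcov
  have hβc : ¬β.card ≤ 1 := by have := (hm.nonempty σ hσM).card_pos; have := hcov.2; omega
  rw [show single σ 1 = bdry V (single β 1) - ∑ v ∈ β.erase v₀, single (β.erase v) 1 by
    rw [bdry_single, if_neg hβc, ← Finset.add_sum_erase β _ hv₀, hv₀σ, add_sub_cancel_right]]
  refine sub_mem (Submodule.mem_sup_right (Submodule.mem_sup_right
    (Submodule.mem_map_of_mem (hcov.2 ▸ single_mem_upChains hβL hβ))))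
    (Submodule.sum_mem _ fun v hv => ?_)
  obtain ⟨hvv₀, hvβ⟩ := Finset.mem_erase.mp hv
  have hτc : (β.erase v).card = σ.card := by
    rw [Finset.card_erase_of_mem hvβ, hcov.2, Nat.add_sub_cancel]
  have hτL : β.erase v ∈ L := (hm.isComplex β hβL).2 _ (Finset.erase_subset v β)
    (by rw [← Finset.card_pos, hτc]; exact (hm.nonempty σ hσM).card_pos)
  rw [← hτc]
  by_cases hτ : β.erase v ∈ m.M ∧ β.erase v ∉ Mup m
  · refine ih _ (isEdge_mu_of_covers hτ.1 hτ.2 ?_ fun h => hvv₀ ?_) hτL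
    · exact covers_iff_exists_erase.mpr ⟨v, hvβ, rfl⟩
    · rw [← Finset.erase_inj β hvβ, hv₀σ, h, m.invol σ hσM]
  · exact hm.single_mem_critWOn_sup_matchWOn_of_mem_M_imp hτL (by tauto)

theorem chainCard_le_critWOn_sup_matchWOn (hm : IsMorseMatchingOn L m φ) (k : ℕ) :
    chainCard L k ≤ critWOn L m φ k ⊔ matchWOn m L k :=
  Submodule.span_le.mpr fun _ ⟨_, hσ, hcard, he⟩ =>
    he ▸ hcard ▸ hm.single_mem_critWOn_sup_matchWOn hσ

end IsMorseMatchingOn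

end Morse

theorem mu_mem_of_filtration {V I : Type*} [Preorder I] {K : I → Set (Finset V)}
    (hmono : ∀ i j, i ≤ j → K i ⊆ K j) {Kinf : Set (Finset V)} {m : PartialMatching V}
    (hMK : m.M ⊆ Kinf) {h : Finset V → I}
    (hh : ∀ σ ∈ Kinf, σ ∈ K (h σ) ∧ ∀ i, σ ∈ K i → h σ ≤ i)
    (hresp : ∀ σ ∈ m.M, h (m.μ σ) = h σ) {σ : Finset V} {i : I} (hσ : σ ∈ m.M)
    (hσi : σ ∈ K i) : m.μ σ ∈ K i := by
  have hμσ := (hh _ (hMK (m.mem_M σ hσ))).1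
  rw [hresp σ hσ] at hμσ
  exact hmono _ _ ((hh σ (hMK hσ)).2 i hσi) hμσ

/-- Let `(K i)_{i ∈ I}` be a filtration of finite simplicial complexes
over a totally ordered index set, with finite union `K∞`, and let `μ` be an acyclic
partial matching on `K∞` that respects the filtration (`h (μ σ) = h σ` where `h σ` is the
smallest index at which `σ` appears). Then for every degree `q ≥ 0`, the maps
`θ_i : H_q(Crit_*(K i, μ)) → H_q(K i)` induced by the inclusion of chains are
isomorphisms, and they commute with the maps induced by the inclusions
`K i ⊆ K j` (`i < j`) on both chain complexes. -/
theorem crit_persistent_iso {V : Type*} [Fintype V] [DecidableEq V]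
    {I : Type*} [LinearOrder I]
    (K : I → Set (Finset V)) (hmono : ∀ i j, i ≤ j → K i ⊆ K j)
    (hcx : ∀ i, IsComplex (K i))
    (Kinf : Set (Finset V)) (hKinf : Kinf = ⋃ i, K i)
    (m : PartialMatching V) (hMK : m.M ⊆ Kinf) (hac : m.Acyclic)
    (h : Finset V → I)
    (hh : ∀ σ ∈ Kinf, σ ∈ K (h σ) ∧ ∀ i, σ ∈ K i → h σ ≤ i)
    (hresp : ∀ σ ∈ m.M, h (m.μ σ) = h σ)
    (φ : Finset V → Ch V) (hφ : IsClosure Kinf m φ)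
    (hincl : ∀ i k, critWOn (K i) m φ k ≤ chainCard (K i) k)
    (q : ℕ) :
    (∀ i, Function.Bijective
        (homolMap (critWOn (K i) m φ) (chainCard (K i)) (hincl i) (q + 1))) ∧
    (∀ i j, ∀ hij : i < j,
      LinearMap.comp
          (homolMap (chainCard (K i)) (chainCard (K j))
            (fun k => chainCard_mono (hmono i j hij.le) k) (q + 1))
          (homolMap (critWOn (K i) m φ) (chainCard (K i)) (hincl i) (q + 1)) =
        LinearMap.comp
          (homolMap (critWOn (K j) m φ) (chainCard (K j)) (hincl j) (q + 1))
          (homolMap (critWOn (K i) m φ) (critWOn (K j) m φ)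
            (fun k => critWOn_mono (hmono i j hij.le) m φ k) (q + 1))) := by
  have hm : ∀ i, IsMorseMatchingOn (K i) m φ := fun i =>
    { isComplex := hcx i
      mu_mem := fun σ hσ hσi => mu_mem_of_filtration hmono hMK hh hresp hσ hσi
      nonempty := fun σ hσ => by
        obtain ⟨j, hj⟩ := Set.mem_iUnion.mp (hKinf ▸ hMK hσ)
        exact (hcx j σ hj).1
      acyclic := hac
      isClosure := fun α hα => hφ α (hKinf ▸ Set.mem_iUnion_of_mem i hα) }
  refine ⟨fun i => homolMap_bijective_of_acyclic_complement (hincl i)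
    (hm i).chainCard_le_critWOn_sup_matchWOn (hm i).disjoint_critWOn_matchWOn
    (fun _ _ => (hm i).bdry_mem_critWOn) (fun _ _ => bdry_mem_matchWOn)
    (fun _ _ => mem_bdriesOf_of_mem_matchWOn hac (hm i).nonempty) q, fun i j hij => ?_⟩
  rw [homolMap_comp, homolMap_comp]
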